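/- Let t ∈ ℚ with t ≠ 0, and let θ_t(z) = t/z², extended to ℙ¹(ℚ) = ℚ ∪ {∞} by θ_t(0) = ∞ and θ_t(∞) = 0. Then the set of rational preperiodic points of θ_t is {0, ∞} if t is not the cube of a rational number, and is {0, ∞, c, −c} if t = c³ for some c ∈ ℚ, c ≠ 0. In the latter case c is a fixed point of θ_t and θ_t(−c) = c. -/

import Mathlib

/-!
For `x ≠ 0` the quantity `r(x) = x³/t` satisfies `r(θ_t x) = r(x)⁻²`, so along the orbit of `x`
it takes the values `r(x)^(-2)ⁿ`. A finite orbit therefore forces `r(x)^m = 1` for some `m ≠ 0`,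
which over `ℚ` means `r(x) = ±1`, i.e. `x³ = ±t`. Conversely a cube root `c` of `t` is fixed and
`θ_t(-c) = θ_t(c)`, and since cubing is injective on `ℚ` the solutions of `x³ = ±t` are `±c`.
-/

/-- `θ_t(z) = t/z²` on `ℙ¹(ℚ)`, modelled as `Option ℚ` with `none` playing the role of `∞`. -/
def theta (t : ℚ) : Option ℚ → Option ℚ
  | none => some 0
  | some x => if x = 0 then none else some (t / x ^ 2)

def IsPreperiodicPt {X : Type*} (f : X → X) (α : X) : Prop :=
  ∃ i j : ℕ, i < j ∧ f^[i] α = f^[j] α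

section Preperiodic

variable {X : Type*} {f : X → X} {a : X}

theorem IsPreperiodicPt.of_apply (h : IsPreperiodicPt f (f a)) : IsPreperiodicPt f a := by
  obtain ⟨i, j, hij, heq⟩ := h
  exact ⟨i + 1, j + 1, Nat.succ_lt_succ hij, by simpa only [Function.iterate_succ_apply] using heq⟩

theorem Function.IsPeriodicPt.isPreperiodicPt {n : ℕ} (h : IsPeriodicPt f n a) (hn : 0 < n) :
    IsPreperiodicPt f a :=
  ⟨0, n, hn, h.symm⟩

theorem Function.IsFixedPt.isPreperiodicPt (h : IsFixedPt f a) : IsPreperiodicPt f a :=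
  (h.isPeriodicPt 1).isPreperiodicPt one_pos

end Preperiodic

section Theta

variable {t x : ℚ}

theorem theta_some_of_ne_zero (hx : x ≠ 0) : theta t (some x) = some (t / x ^ 2) :=
  if_neg hx

theorem theta_some_neg (t x : ℚ) : theta t (some (-x)) = theta t (some x) := by
  simp only [theta, neg_eq_zero, neg_sq]

theorem theta_some_of_pow_three_eq (hx : x ≠ 0) (h : x ^ 3 = t) : theta t (some x) = some x := by
  rw [theta_some_of_ne_zero hx, ← h]
  field_simp

theorem isPreperiodicPt_theta_none (t : ℚ) : IsPreperiodicPt (theta t) none :=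
  Function.IsPeriodicPt.isPreperiodicPt (n := 2) rfl two_pos

theorem isPreperiodicPt_theta_zero (t : ℚ) : IsPreperiodicPt (theta t) (some 0) :=
  IsPreperiodicPt.of_apply (isPreperiodicPt_theta_none t)

theorem div_sq_pow_three_div (ht : t ≠ 0) (hx : x ≠ 0) :
    (t / x ^ 2) ^ 3 / t = (x ^ 3 / t) ^ (-2 : ℤ) := by
  rw [zpow_neg, zpow_two]
  field_simp

theorem iterate_theta_some (ht : t ≠ 0) (hx : x ≠ 0) (n : ℕ) :
    ∃ y, (theta t)^[n] (some x) = some y ∧ y ^ 3 / t = (x ^ 3 / t) ^ ((-2 : ℤ) ^ n) := by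
  induction n generalizing x with
  | zero => exact ⟨x, rfl, by rw [pow_zero, zpow_one]⟩
  | succ n ih =>
    obtain ⟨y, hiter, hr⟩ := ih (div_ne_zero ht (pow_ne_zero 2 hx))
    refine ⟨y, ?_, ?_⟩
    · rw [Function.iterate_succ_apply, theta_some_of_ne_zero hx, hiter]
    · rw [hr, div_sq_pow_three_div ht hx, ← zpow_mul, pow_succ' (-2 : ℤ) n]

theorem pow_three_eq_or_eq_neg_of_isPreperiodicPt (ht : t ≠ 0) (hx : x ≠ 0)
    (h : IsPreperiodicPt (theta t) (some x)) : x ^ 3 = t ∨ x ^ 3 = -t := by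
  obtain ⟨i, j, hij, heq⟩ := h
  obtain ⟨yi, hi, hri⟩ := iterate_theta_some ht hx i
  obtain ⟨yj, hj, hrj⟩ := iterate_theta_some ht hx j
  have hr0 : x ^ 3 / t ≠ 0 := div_ne_zero (pow_ne_zero 3 hx) ht
  have hm : (-2 : ℤ) ^ i - (-2) ^ j ≠ 0 :=
    sub_ne_zero.mpr ((Int.pow_right_injective (by decide)).ne hij.ne)
  have hpow : (x ^ 3 / t) ^ (-2 : ℤ) ^ i = (x ^ 3 / t) ^ (-2 : ℤ) ^ j := by
    rw [← hri, ← hrj, Option.some_injective _ (hi.symm.trans (heq.trans hj))]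
  have hone : (x ^ 3 / t) ^ ((-2 : ℤ) ^ i - (-2) ^ j) = 1 := by
    rw [zpow_sub₀ hr0, hpow, div_self (zpow_ne_zero _ hr0)]
  rcases (zpow_eq_one_iff_of_ne_zero₀ hm).mp hone with hr | ⟨hr, -⟩
  · exact .inl ((div_eq_one_iff_eq ht).mp hr)
  · exact .inr ((div_eq_iff ht).mp hr |>.trans (neg_one_mul t))

theorem isPreperiodicPt_theta_some_iff (ht : t ≠ 0) :
    IsPreperiodicPt (theta t) (some x) ↔ x = 0 ∨ x ^ 3 = t ∨ x ^ 3 = -t := by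
  constructor
  · intro h
    by_cases hx : x = 0
    · exact .inl hx
    · exact .inr (pow_three_eq_or_eq_neg_of_isPreperiodicPt ht hx h)
  · have hx : x ^ 3 = t ∨ x ^ 3 = -t → x ≠ 0 := by
      rintro h rfl
      rcases h with h | h <;> simp_all
    rintro (rfl | h | h)
    · exact isPreperiodicPt_theta_zero t
    · exact Function.IsFixedPt.isPreperiodicPt (theta_some_of_pow_three_eq (hx (.inl h)) h)
    · have hfix : theta t (some (-x)) = some (-x) :=
        theta_some_of_pow_three_eq (neg_ne_zero.mpr (hx (.inr h)))
          (by rw [Odd.neg_pow (by decide), h, neg_neg])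
      refine IsPreperiodicPt.of_apply ?_
      rw [← theta_some_neg, hfix]
      exact Function.IsFixedPt.isPreperiodicPt hfix

end Theta

/-- For `t ∈ ℚ×`, the rational preperiodic points of `θ_t(z) = t/z²` are
`{0, ∞}` when `t` is not a cube in ℚ, and `{0, ∞, c, −c}` when `t = c³` with
`c ≠ 0`; in the latter case `θ_t(c) = c` and `θ_t(−c) = c`. -/
theorem theta_preperiodic_points (t : ℚ) (ht : t ≠ 0) :
    ((¬ ∃ c : ℚ, c ^ 3 = t) →
      {α : Option ℚ | IsPreperiodicPt (theta t) α} =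
        ({none, some 0} : Set (Option ℚ))) ∧
    (∀ c : ℚ, c ≠ 0 → c ^ 3 = t →
      {α : Option ℚ | IsPreperiodicPt (theta t) α} =
          ({none, some 0, some c, some (-c)} : Set (Option ℚ)) ∧
        theta t (some c) = some c ∧ theta t (some (-c)) = some c) := by
  have hcube : Odd 3 := by decide
  refine ⟨fun hnc => ?_, fun c hc hct => ?_⟩
  · ext (_ | x)
    · simpa using isPreperiodicPt_theta_none t
    · have hpos : ¬ x ^ 3 = t := fun h => hnc ⟨x, h⟩
      have hneg : ¬ x ^ 3 = -t := fun h => hnc ⟨-x, by rw [hcube.neg_pow, h, neg_neg]⟩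
      simp [isPreperiodicPt_theta_some_iff ht, hpos, hneg]
  · have hfix := theta_some_of_pow_three_eq hc hct
    refine ⟨?_, hfix, theta_some_neg t c ▸ hfix⟩
    ext (_ | x)
    · simpa using isPreperiodicPt_theta_none t
    · rw [Set.mem_ofPred_eq, isPreperiodicPt_theta_some_iff ht, ← hct, ← hcube.neg_pow,
        hcube.pow_inj, hcube.pow_inj]
      simp
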